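/- arXiv:1412.2039 — 2 statements merged into one kernel-verified Lean document; each statement's English description precedes it below -/
import Mathlib

section
/- Let (E,ρ) and (I,d) be complete separable metric spaces and equip E×I with the metric ρ+d. Let δ, ε > 0 and let μ, μ̂ be finite Borel measures on E×I with μ ∈ M^E_{2δ,ε} and dPr(μ,μ̂) < δ. Then β(μ̂) ≤ (ε+2δ)·(2 + μ(E×I) + δ). -/
open MeasureTheory Filter Topology ENNReal

/-- The variational distance `‖μ − ν‖ = sup_B |μ(B) − ν(B)|` between finite measures. -/
noncomputable def varDist {E : Type*} [MeasurableSpace E] (μ ν : Measure E) : ℝ≥0∞ :=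
  ⨆ (B : Set E) (_ : MeasurableSet B), max (μ B - ν B) (ν B - μ B)

/-- `β(μ) = ∫_X ∫_I ∫_I (1 ∧ d(u,v)) K_x(du) K_x(dv) ν(dx)` where `ν` is the first
marginal of `μ` and `K` its disintegration (conditional) kernel. -/
noncomputable def beta {X I : Type*} [MeasurableSpace X]
    [MetricSpace I] [MeasurableSpace I] [StandardBorelSpace I] [Nonempty I]
    (μ : Measure (X × I)) [IsFiniteMeasure μ] : ℝ≥0∞ :=
  ∫⁻ x, ∫⁻ u, ∫⁻ v, ENNReal.ofReal (min 1 (dist u v)) ∂(μ.condKernel x) ∂(μ.condKernel x) ∂μ.fst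

/-- The set `A^X_{δ,ε} = {((x₁,u₁),(x₂,u₂)) | r(x₁,x₂) ≥ δ or d(u₁,u₂) ≤ ε}`. -/
def Aset {X I : Type*} [PseudoMetricSpace X] [PseudoMetricSpace I] (δ : ℝ) (ε : ℝ≥0∞) :
    Set ((X × I) × (X × I)) :=
  {p | δ ≤ dist p.1.1 p.2.1 ∨ ENNReal.ofReal (dist p.1.2 p.2.2) ≤ ε}

/-- `μ ∈ M^X_{δ,ε}`: there is a finite measure `μ' ≤ μ` with `‖μ − μ'‖ ≤ ε` such that
`μ' ⊗ μ'` is supported on `A^X_{δ,ε}`. -/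
def memM {X I : Type*} [PseudoMetricSpace X] [PseudoMetricSpace I]
    [MeasurableSpace X] [MeasurableSpace I]
    (μ : Measure (X × I)) (δ : ℝ) (ε : ℝ≥0∞) : Prop :=
  ∃ μ' : Measure (X × I), IsFiniteMeasure μ' ∧ μ' ≤ μ ∧ varDist μ μ' ≤ ε ∧
    (μ'.prod μ') (Aset δ ε)ᶜ = 0

/-- The open `ε`-neighbourhood of `A ⊆ E × I` with respect to the sum metric `ρ + d`. -/
def sumThick {E I : Type*} [PseudoMetricSpace E] [PseudoMetricSpace I] (ε : ℝ)
    (A : Set (E × I)) : Set (E × I) :=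
  {p | ∃ q ∈ A, dist p.1 q.1 + dist p.2 q.2 < ε}

/-- The Prohorov metric between finite Borel measures on `E × I`, where `E × I` carries
the sum metric `ρ + d`. -/
noncomputable def dPrSum {E I : Type*} [PseudoMetricSpace E] [PseudoMetricSpace I]
    [MeasurableSpace E] [MeasurableSpace I] (μ ν : Measure (E × I)) : ℝ :=
  sInf {ε : ℝ | 0 < ε ∧ ∀ A : Set (E × I), MeasurableSet A →
    μ A ≤ ν (sumThick ε A) + ENNReal.ofReal ε ∧ ν A ≤ μ (sumThick ε A) + ENNReal.ofReal ε}

/-!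
Let `μ'` be the measure witnessing `μ ∈ M^E_{2δ,ε}` and `S` its support. Since `μ' ⊗ μ'` does not
charge the open set of pairs with bases closer than `2δ` and marks farther than `ε`, any two
points of `S` with bases closer than `2δ` have marks within `ε`. Take a Prohorov radius `η < δ`
and let `T` be the `η`-neighbourhood of `S`. Two points of `T` over the same base have marks
within `ε + 2δ`, while `μ̂(Tᶜ) ≤ μ(Sᶜ) + 2η ≤ ε + 2δ`. Bounding `1 ∧ d(u,v)` by `ε + 2δ` when
`(x,u), (x,v) ∈ T` and by `1` otherwise gives `β(μ̂) ≤ (ε + 2δ) μ̂(E×I) + 2 μ̂(Tᶜ)`, and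
`μ̂(E×I) ≤ μ(E×I) + δ`.
-/

lemma measure_le_add_varDist {X : Type*} [MeasurableSpace X] (μ ν : Measure X) {B : Set X}
    (hB : MeasurableSet B) : μ B ≤ ν B + varDist μ ν :=
  tsub_le_iff_left.1 <| le_iSup₂_of_le (f := fun B _ => max (μ B - ν B) (ν B - μ B)) B hB
    (le_max_left _ _)

lemma measure_prod_pos_of_mem_support {X Y : Type*} [TopologicalSpace X] [MeasurableSpace X]
    [TopologicalSpace Y] [MeasurableSpace Y] {μ : Measure X} {ν : Measure Y} [SFinite ν]
    {x : X} {y : Y} (hx : x ∈ μ.support) (hy : y ∈ ν.support) {W : Set (X × Y)}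
    (hW : IsOpen W) (hxy : (x, y) ∈ W) : 0 < μ.prod ν W := by
  obtain ⟨U, V, hU, hV, hxU, hyV, hUV⟩ := isOpen_prod_iff.1 hW x y hxy
  refine lt_of_lt_of_le ?_ (measure_mono hUV)
  rw [Measure.prod_prod]
  exact ENNReal.mul_pos ((Measure.mem_support_iff_forall x).1 hx U (hU.mem_nhds hxU)).ne'
    ((Measure.mem_support_iff_forall y).1 hy V (hV.mem_nhds hyV)).ne'

lemma ofReal_dist_snd_le_of_mem_support {X I : Type*} [PseudoMetricSpace X]
    [PseudoMetricSpace I] [MeasurableSpace X] [MeasurableSpace I] {μ : Measure (X × I)}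
    [SFinite μ] {δ : ℝ} {ε : ℝ≥0∞} (hA : (μ.prod μ) (Aset δ ε)ᶜ = 0) {p q : X × I}
    (hp : p ∈ μ.support) (hq : q ∈ μ.support) (hpq : dist p.1 q.1 < δ) :
    ENNReal.ofReal (dist p.2 q.2) ≤ ε := by
  by_contra! hfar
  have hW : IsOpen {w : (X × I) × (X × I) |
      dist w.1.1 w.2.1 < δ ∧ ε < ENNReal.ofReal (dist w.1.2 w.2.2)} :=
    (isOpen_lt (continuous_fst.fst.dist continuous_snd.fst) continuous_const).inter
      (isOpen_lt continuous_const
        (ENNReal.continuous_ofReal.comp (continuous_fst.snd.dist continuous_snd.snd)))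
  refine (measure_prod_pos_of_mem_support hp hq hW ⟨hpq, hfar⟩).ne' (measure_mono_null ?_ hA)
  rintro w ⟨hclose, hmarks⟩ (hw | hw)
  exacts [hclose.not_ge hw, hmarks.not_ge hw]

section SumThick

variable {E I : Type*} [PseudoMetricSpace E] [PseudoMetricSpace I]

lemma isOpen_sumThick (η : ℝ) (S : Set (E × I)) : IsOpen (sumThick η S) := by
  have : sumThick η S = ⋃ q ∈ S, {p : E × I | dist p.1 q.1 + dist p.2 q.2 < η} := by
    ext p; simp [sumThick]
  rw [this]
  exact isOpen_biUnion fun q _ => isOpen_lt (by fun_prop) continuous_const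

lemma sumThick_univ {η : ℝ} (hη : 0 < η) : sumThick η (Set.univ : Set (E × I)) = Set.univ :=
  Set.eq_univ_of_forall fun p => ⟨p, trivial, by simpa using hη⟩

lemma dist_le_of_mem_sumThick {S : Set (E × I)} {η δ ε : ℝ} (hηδ : η ≤ δ)
    (hS : ∀ p ∈ S, ∀ q ∈ S, dist p.1 q.1 < 2 * δ → dist p.2 q.2 ≤ ε) {x : E} {u v : I}
    (hu : (x, u) ∈ sumThick η S) (hv : (x, v) ∈ sumThick η S) : dist u v ≤ ε + 2 * δ := by
  obtain ⟨q, hqS, hq⟩ := hu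
  obtain ⟨q', hq'S, hq'⟩ := hv
  have hmarks := hS q hqS q' hq'S <| by
    linarith [dist_triangle_left q.1 q'.1 x, dist_nonneg (x := u) (y := q.2),
      dist_nonneg (x := v) (y := q'.2)]
  linarith [dist_triangle4 u q.2 q'.2 v, dist_comm q'.2 v, dist_nonneg (x := x) (y := q.1),
    dist_nonneg (x := x) (y := q'.1)]

variable [MeasurableSpace E] [MeasurableSpace I]

def ProhorovClose (η : ℝ) (μ ν : Measure (E × I)) : Prop :=
  ∀ A : Set (E × I), MeasurableSet A →
    μ A ≤ ν (sumThick η A) + ENNReal.ofReal η ∧ ν A ≤ μ (sumThick η A) + ENNReal.ofReal η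

lemma exists_prohorovClose_of_dPrSum_lt {μ ν : Measure (E × I)} [IsFiniteMeasure μ]
    [IsFiniteMeasure ν] {δ : ℝ} (h : dPrSum μ ν < δ) :
    ∃ η, 0 < η ∧ η < δ ∧ ProhorovClose η μ ν := by
  set M := μ Set.univ + ν Set.univ
  have hM : ∀ A, μ A ≤ ENNReal.ofReal (M.toReal + 1) ∧ ν A ≤ ENNReal.ofReal (M.toReal + 1) := by
    have hM_le : M ≤ ENNReal.ofReal (M.toReal + 1) :=
      (ENNReal.ofReal_toReal (by finiteness)).symm.le.trans (ENNReal.ofReal_le_ofReal (by simp))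
    exact fun A => ⟨((measure_mono (Set.subset_univ A)).trans le_self_add).trans hM_le,
      ((measure_mono (Set.subset_univ A)).trans le_add_self).trans hM_le⟩
  have hne : {η : ℝ | 0 < η ∧ ProhorovClose η μ ν}.Nonempty :=
    ⟨M.toReal + 1, by positivity, fun A _ => ⟨le_add_left (hM A).1, le_add_left (hM A).2⟩⟩
  obtain ⟨η, ⟨hη, hclose⟩, hηδ⟩ := exists_lt_of_csInf_lt hne h
  exact ⟨η, hη, hηδ, hclose⟩

lemma ProhorovClose.measure_compl_sumThick_le [BorelSpace E] [BorelSpace I]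
    [SecondCountableTopology E] [SecondCountableTopology I] {μ ν : Measure (E × I)}
    [IsFiniteMeasure ν] {η : ℝ} (h : ProhorovClose η μ ν) (hη : 0 < η) {S : Set (E × I)}
    (hS : MeasurableSet S) : ν (sumThick η S)ᶜ ≤ μ Sᶜ + 2 * ENNReal.ofReal η := by
  have hT := (isOpen_sumThick η S).measurableSet
  have hν_univ : ν Set.univ ≤ μ Set.univ + ENNReal.ofReal η := by
    simpa [sumThick_univ hη] using (h Set.univ MeasurableSet.univ).2
  refine (ENNReal.add_le_add_iff_right (measure_ne_top ν (sumThick η S))).1 ?_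
  calc ν (sumThick η S)ᶜ + ν (sumThick η S) = ν Set.univ := by
        rw [add_comm, measure_add_measure_compl hT]
    _ ≤ μ S + μ Sᶜ + ENNReal.ofReal η := by rwa [measure_add_measure_compl hS]
    _ ≤ ν (sumThick η S) + ENNReal.ofReal η + μ Sᶜ + ENNReal.ofReal η := by
        gcongr; exact (h S hS).1
    _ = μ Sᶜ + 2 * ENNReal.ofReal η + ν (sumThick η S) := by ring

end SumThick

section Beta

variable {I : Type*} [MetricSpace I]

lemma ofReal_min_one_dist_le_add_indicator {s : Set I} {c : ℝ}
    (hc : ∀ u v, u ∉ s → v ∉ s → dist u v ≤ c) (u v : I) :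
    ENNReal.ofReal (min 1 (dist u v)) ≤ ENNReal.ofReal c + s.indicator 1 u + s.indicator 1 v := by
  have h_one : ENNReal.ofReal (min 1 (dist u v)) ≤ 1 := ENNReal.ofReal_le_one.2 (min_le_left _ _)
  by_cases hu : u ∈ s
  · rw [Set.indicator_of_mem hu, Pi.one_apply]
    exact h_one.trans (le_add_self.trans le_self_add)
  by_cases hv : v ∈ s
  · rw [Set.indicator_of_mem hv, Pi.one_apply]
    exact h_one.trans le_add_self
  exact (ENNReal.ofReal_le_ofReal ((min_le_right _ _).trans (hc u v hu hv))).trans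
    (le_self_add.trans le_self_add)

variable [MeasurableSpace I]

lemma lintegral_lintegral_min_one_dist_le (κ : Measure I) [IsProbabilityMeasure κ] {s : Set I}
    (hs : MeasurableSet s) {c : ℝ} (hc : ∀ u v, u ∉ s → v ∉ s → dist u v ≤ c) :
    ∫⁻ u, ∫⁻ v, ENNReal.ofReal (min 1 (dist u v)) ∂κ ∂κ ≤ ENNReal.ofReal c + 2 * κ s := by
  have h_int : ∀ a : ℝ≥0∞, ∫⁻ w, (a + s.indicator 1 w) ∂κ = a + κ s := fun a => by
    rw [lintegral_add_left measurable_const, lintegral_indicator_one hs, lintegral_const,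
      measure_univ, mul_one]
  calc ∫⁻ u, ∫⁻ v, ENNReal.ofReal (min 1 (dist u v)) ∂κ ∂κ
      ≤ ∫⁻ u, ∫⁻ v, (ENNReal.ofReal c + s.indicator 1 u + s.indicator 1 v) ∂κ ∂κ :=
        lintegral_mono fun u => lintegral_mono fun v =>
          ofReal_min_one_dist_le_add_indicator hc u v
    _ = ∫⁻ u, (ENNReal.ofReal c + κ s + s.indicator 1 u) ∂κ :=
        lintegral_congr fun u => by rw [h_int, add_right_comm]
    _ = ENNReal.ofReal c + κ s + κ s := h_int _
    _ = ENNReal.ofReal c + 2 * κ s := by ring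

lemma beta_le_of_dist_le {X : Type*} [MeasurableSpace X] [StandardBorelSpace I] [Nonempty I]
    (μ : Measure (X × I)) [IsFiniteMeasure μ] {T : Set (X × I)} (hT : MeasurableSet T) {c : ℝ}
    (hc : ∀ x u v, (x, u) ∈ T → (x, v) ∈ T → dist u v ≤ c) :
    beta μ ≤ ENNReal.ofReal c * μ Set.univ + 2 * μ Tᶜ := by
  have h_fiber (x : X) : MeasurableSet (Prod.mk x ⁻¹' Tᶜ) :=
    hT.compl.preimage measurable_prodMk_left
  calc beta μ ≤ ∫⁻ x, (ENNReal.ofReal c + 2 * μ.condKernel x (Prod.mk x ⁻¹' Tᶜ)) ∂μ.fst :=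
        lintegral_mono fun x => lintegral_lintegral_min_one_dist_le _ (h_fiber x)
          fun u v hu hv => hc x u v (not_not.1 hu) (not_not.1 hv)
    _ = ENNReal.ofReal c * μ Set.univ + 2 * μ Tᶜ := by
        rw [lintegral_add_left measurable_const, lintegral_const, lintegral_const_mul 2
          (ProbabilityTheory.Kernel.measurable_kernel_prodMk_left hT.compl),
          Measure.fst_univ, ← Measure.lintegral_condKernel_mem hT.compl]
        rfl

end Beta

theorem beta_ball_estimate_general {E I : Type*}
    [MetricSpace E] [SecondCountableTopology E]
    [MeasurableSpace E] [BorelSpace E]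
    [MetricSpace I] [CompleteSpace I] [SecondCountableTopology I]
    [MeasurableSpace I] [BorelSpace I] [Nonempty I]
    (δ ε : ℝ) (hε : 0 < ε)
    (μ μhat : Measure (E × I)) [IsFiniteMeasure μ] [IsFiniteMeasure μhat]
    (hM : memM μ (2 * δ) (ENNReal.ofReal ε))
    (hPr : dPrSum μ μhat < δ) :
    beta μhat ≤ ENNReal.ofReal (ε + 2 * δ) * (2 + μ Set.univ + ENNReal.ofReal δ) := by
  obtain ⟨μ', _, -, hvar, hA⟩ := hM
  obtain ⟨η, hη, hηδ, hclose⟩ := exists_prohorovClose_of_dPrSum_lt hPr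
  set S := μ'.support
  have hS : MeasurableSet S := Measure.isClosed_support.measurableSet
  have hμS : μ Sᶜ ≤ ENNReal.ofReal ε :=
    calc μ Sᶜ ≤ μ' Sᶜ + varDist μ μ' := measure_le_add_varDist μ μ' hS.compl
      _ = varDist μ μ' := by simp [S]
      _ ≤ ENNReal.ofReal ε := hvar
  have hT : μhat (sumThick η S)ᶜ ≤ ENNReal.ofReal (ε + 2 * δ) :=
    calc μhat (sumThick η S)ᶜ ≤ μ Sᶜ + 2 * ENNReal.ofReal η :=
          hclose.measure_compl_sumThick_le hη hS
      _ ≤ ENNReal.ofReal ε + 2 * ENNReal.ofReal δ := by gcongr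
      _ = ENNReal.ofReal (ε + 2 * δ) := by
          rw [ENNReal.ofReal_add hε.le (by linarith), ENNReal.ofReal_mul zero_le_two,
            ENNReal.ofReal_ofNat]
  have hμhat : μhat Set.univ ≤ μ Set.univ + ENNReal.ofReal δ :=
    calc μhat Set.univ ≤ μ (sumThick η Set.univ) + ENNReal.ofReal η :=
          (hclose Set.univ MeasurableSet.univ).2
      _ ≤ μ Set.univ + ENNReal.ofReal δ := by rw [sumThick_univ hη]; gcongr
  calc beta μhat ≤ ENNReal.ofReal (ε + 2 * δ) * μhat Set.univ + 2 * μhat (sumThick η S)ᶜ :=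
        beta_le_of_dist_le μhat (isOpen_sumThick η S).measurableSet fun x u v hu hv =>
          dist_le_of_mem_sumThick hηδ.le (fun p hp q hq hpq => (ENNReal.ofReal_le_ofReal_iff
            hε.le).1 (ofReal_dist_snd_le_of_mem_support hA hp hq hpq)) hu hv
    _ ≤ ENNReal.ofReal (ε + 2 * δ) * (μ Set.univ + ENNReal.ofReal δ) +
        2 * ENNReal.ofReal (ε + 2 * δ) := by gcongr
    _ = ENNReal.ofReal (ε + 2 * δ) * (2 + μ Set.univ + ENNReal.ofReal δ) := by ring

/-- If `μ ∈ M^E_{2δ,ε}` and `dPr(μ,μ̂) < δ` (Prohorov metric w.r.t. the sum metric on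
`E × I`), then `β(μ̂) ≤ (ε+2δ)·(2 + μ(E×I) + δ)`. -/
theorem beta_ball_estimate {E I : Type*}
    [MetricSpace E] [CompleteSpace E] [SecondCountableTopology E]
    [MeasurableSpace E] [BorelSpace E]
    [MetricSpace I] [CompleteSpace I] [SecondCountableTopology I]
    [MeasurableSpace I] [BorelSpace I] [Nonempty I]
    (δ ε : ℝ) (hδ : 0 < δ) (hε : 0 < ε)
    (μ μhat : Measure (E × I)) [IsFiniteMeasure μ] [IsFiniteMeasure μhat]
    (hM : memM μ (2 * δ) (ENNReal.ofReal ε))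
    (hPr : dPrSum μ μhat < δ) :
    beta μhat ≤ ENNReal.ofReal (ε + 2 * δ) * (2 + μ Set.univ + ENNReal.ofReal δ) :=
  beta_ball_estimate_general δ ε hε μ μhat hM hPr
end

section
/- Let (E,ρ) and (I,d) be complete separable metric spaces and δ, ε > 0. Let μ_n (n ∈ ℕ) and μ be finite Borel measures on E×I such that μ_n → μ weakly and μ_n ∈ M^E_{δ,ε} for every n. Then μ ∈ M^E_{δ,ε}. -/
open MeasureTheory Filter Topology ENNReal

/-- Weak convergence of finite Borel measures: convergence of integrals of all bounded
continuous functions. -/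
def WeakConv {E : Type*} [TopologicalSpace E] [MeasurableSpace E]
    (μ : ℕ → Measure E) (ν : Measure E) : Prop :=
  ∀ f : BoundedContinuousFunction E ℝ,
    Tendsto (fun n => ∫ x, f x ∂(μ n)) atTop (𝓝 (∫ x, f x ∂ν))

/-!
Along an ultrafilter finer than `atTop`, the integrals of bounded continuous functions against the
sub-measures `μ'ₙ` converge to a linear functional `Λ` with `0 ≤ Λ f ≤ ∫ f dν` for `f ≥ 0`.
Such a functional is bounded on `L²(ν)`, so by Hahn–Banach and the Riesz representation theorem it
is integration against a density `0 ≤ g ≤ 1`, and `m = g • ν ≤ ν` is the candidate sub-measure.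
Testing against `1` shows that `m` loses at most `ε` of the mass of `ν`. Testing against products
of continuous approximations of the indicators of open rectangles inside the open set `Aᶜ`, which
`μ'ₙ ⊗ μ'ₙ` does not charge, shows that `m ⊗ m` does not charge `Aᶜ` either.
-/

open Set BoundedContinuousFunction TopologicalSpace

section VarDist

variable {X : Type*} [MeasurableSpace X]

lemma measure_univ_le_add_varDist (μ ν : Measure X) : μ univ ≤ ν univ + varDist μ ν := by
  rw [← tsub_le_iff_left]
  exact (le_max_left _ _).trans <| le_iSup₂ (f := fun B (_ : MeasurableSet B) ↦
    max (μ B - ν B) (ν B - μ B)) univ MeasurableSet.univ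

lemma varDist_le_of_le {μ ν : Measure X} [IsFiniteMeasure μ] (hνμ : ν ≤ μ) {ε : ℝ≥0∞}
    (hmass : μ univ ≤ ν univ + ε) : varDist μ ν ≤ ε := by
  refine iSup₂_le fun B hB ↦ max_le ?_ (by simp [tsub_eq_zero_of_le (hνμ B)])
  rw [tsub_le_iff_left]
  refine ENNReal.le_of_add_le_add_right (measure_ne_top μ Bᶜ) ?_
  calc μ B + μ Bᶜ = μ univ := measure_add_measure_compl hB
    _ ≤ ν B + ν Bᶜ + ε := by rwa [measure_add_measure_compl hB]
    _ ≤ ν B + ε + μ Bᶜ := by rw [add_right_comm]; gcongr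

end VarDist

lemma isClosed_Aset {X I : Type*} [PseudoMetricSpace X] [PseudoMetricSpace I] (δ : ℝ)
    (ε : ℝ≥0∞) : IsClosed (Aset (X := X) (I := I) δ ε) := by
  rw [Aset, ofPred_or]
  exact (isClosed_le continuous_const (by fun_prop)).union
    (isClosed_le (ENNReal.continuous_ofReal.comp (by fun_prop)) continuous_const)

lemma integral_mul_integral_eq_zero {X Y : Type*} [MeasurableSpace X] [MeasurableSpace Y]
    {μ : Measure X} {ν : Measure Y} [SFinite μ] [SFinite ν] {A : Set (X × Y)}
    (hA : μ.prod ν Aᶜ = 0) {f : X → ℝ} {g : Y → ℝ} (hfg : ∀ p ∈ A, f p.1 * g p.2 = 0) :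
    (∫ x, f x ∂μ) * ∫ y, g y ∂ν = 0 := by
  rw [← integral_prod_mul]
  exact integral_eq_zero_of_ae <| (measure_eq_zero_iff_ae_notMem.mp hA).mono
    fun p hp ↦ hfg p (not_not.mp hp)

lemma measure_prod_eq_zero_of_isOpen {X Y : Type*} [TopologicalSpace X] [TopologicalSpace Y]
    [SecondCountableTopology X] [SecondCountableTopology Y]
    [MeasurableSpace X] [MeasurableSpace Y] (μ : Measure X) (ν : Measure Y) [SFinite ν]
    {W : Set (X × Y)} (hW : IsOpen W)
    (h : ∀ U V, IsOpen U → IsOpen V → U ×ˢ V ⊆ W → μ U * ν V = 0) : μ.prod ν W = 0 := by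
  obtain ⟨S, hSbasis, rfl⟩ := ((isBasis_countableBasis X).prod
    (isBasis_countableBasis Y)).open_eq_sUnion hW
  refine (measure_sUnion_null_iff (((countable_countableBasis X).image2
    (countable_countableBasis Y) _).mono hSbasis)).mpr fun s hs ↦ ?_
  obtain ⟨U, hU, V, hV, rfl⟩ := hSbasis hs
  rw [Measure.prod_prod]
  exact h U V (isOpen_of_mem_countableBasis hU) (isOpen_of_mem_countableBasis hV)
    (subset_sUnion_of_mem hs)

section Approximation

variable {X : Type*} [TopologicalSpace X] [HasOuterApproxClosed X]

noncomputable def IsClosed.realApprSeq {F : Set X} (hF : IsClosed F) (k : ℕ) : X →ᵇ ℝ :=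
  (hF.apprSeq k).comp _ NNReal.isometry_coe.lipschitz

variable {F : Set X} (hF : IsClosed F)

lemma IsClosed.realApprSeq_nonneg (k : ℕ) (x : X) : 0 ≤ hF.realApprSeq k x :=
  (hF.apprSeq k x).2

lemma IsClosed.realApprSeq_eq_one (k : ℕ) {x : X} (hx : x ∈ F) : hF.realApprSeq k x = 1 := by
  simp [IsClosed.realApprSeq, HasOuterApproxClosed.apprSeq_apply_eq_one hF k hx]

variable [MeasurableSpace X] [OpensMeasurableSpace X]

lemma IsClosed.tendsto_integral_realApprSeq_mul {μ : Measure X}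
    {h : X → ℝ} (hh : Integrable h μ) :
    Tendsto (fun k ↦ ∫ x, hF.realApprSeq k x * h x ∂μ) atTop (𝓝 (∫ x in F, h x ∂μ)) := by
  rw [← integral_indicator hF.measurableSet]
  refine tendsto_integral_of_dominated_convergence (fun x ↦ |h x|)
    (fun k ↦ (hF.realApprSeq k).continuous.aestronglyMeasurable.mul hh.1) hh.abs
    (fun k ↦ ae_of_all _ fun x ↦ ?_) (ae_of_all _ fun x ↦ ?_)
  · simpa [abs_mul, IsClosed.realApprSeq] using mul_le_of_le_one_left (abs_nonneg (h x))
      (HasOuterApproxClosed.apprSeq_apply_le_one hF k x)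
  · have hlim := (NNReal.continuous_coe.tendsto _).comp
      (tendsto_pi_nhds.mp (HasOuterApproxClosed.tendsto_apprSeq hF) x)
    by_cases hx : x ∈ F <;> simpa [hx, IsClosed.realApprSeq] using hlim.mul_const (h x)

lemma IsOpen.tendsto_integral_one_sub_realApprSeq {U : Set X}
    (hU : IsOpen U) (μ : Measure X) [IsFiniteMeasure μ] :
    Tendsto (fun k ↦ ∫ x, (1 - hU.isClosed_compl.realApprSeq k) x ∂μ) atTop (𝓝 (μ.real U)) := by
  have hlim :=
    hU.isClosed_compl.tendsto_integral_realApprSeq_mul (integrable_const (1 : ℝ)) (μ := μ)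
  simp only [mul_one, setIntegral_const, smul_eq_mul] at hlim
  rw [eq_sub_of_add_eq (measureReal_add_measureReal_compl hU.measurableSet)]
  refine (hlim.const_sub _).congr fun k ↦ ?_
  simp [integral_sub (integrable_const (1 : ℝ)) ((hU.isClosed_compl.realApprSeq k).integrable μ)]

end Approximation

lemma exists_ultrafilter_tendsto_linearMap {ι M : Type*} [AddCommGroup M] [Module ℝ M]
    (l : Filter ι) [l.NeBot] (φ : ι → M →ₗ[ℝ] ℝ) (hφ : ∀ x, ∃ C, ∀ i, |φ i x| ≤ C) :
    ∃ (U : Ultrafilter ι) (Λ : M →ₗ[ℝ] ℝ), ↑U ≤ l ∧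
      ∀ x, Tendsto (fun i ↦ φ i x) U (𝓝 (Λ x)) := by
  choose C hC using hφ
  obtain ⟨Λ, -, hΛ⟩ := (isCompact_univ_pi fun x ↦ isCompact_Icc (a := -C x) (b := C x))
    |>.ultrafilter_le_nhds ((Ultrafilter.of l).map fun i x ↦ φ i x) <| by
      refine le_principal_iff.mpr <| Ultrafilter.mem_map.mpr <| univ_mem' fun i ↦ ?_
      exact fun x _ ↦ abs_le.mp (hC x i)
  exact ⟨Ultrafilter.of l, linearMapOfTendsto Λ φ hΛ, Ultrafilter.of_le l, tendsto_pi_nhds.mp hΛ⟩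

lemma LinearMap.exists_strongDual_comp_eq {E F : Type*} [AddCommGroup E] [Module ℝ E]
    [NormedAddCommGroup F] [NormedSpace ℝ F] (J : E →ₗ[ℝ] F) (Λ : E →ₗ[ℝ] ℝ) {C : ℝ}
    (hΛ : ∀ x, |Λ x| ≤ C * ‖J x‖) : ∃ T : StrongDual ℝ F, ∀ x, T (J x) = Λ x := by
  have hker : LinearMap.ker J ≤ LinearMap.ker Λ := fun x hx ↦ by
    simpa [LinearMap.mem_ker.mp hx] using hΛ x
  let ψ : LinearMap.range J →ₗ[ℝ] ℝ :=
    (LinearMap.ker J).liftQ Λ hker ∘ₗ J.quotKerEquivRange.symm.toLinearMap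
  have hψ (x : E) : ψ ⟨J x, LinearMap.mem_range_self J x⟩ = Λ x := by
    simp [ψ, LinearMap.quotKerEquivRange_symm_apply_image]
  have hψC (y : LinearMap.range J) : ‖ψ y‖ ≤ C * ‖y‖ := by
    obtain ⟨_, x, rfl⟩ := y
    exact (hψ x).symm ▸ hΛ x
  obtain ⟨T, hT, -⟩ := exists_extension_norm_eq _ (ψ.mkContinuous C hψC)
  exact ⟨T, fun x ↦ (hT ⟨J x, LinearMap.mem_range_self J x⟩).trans (hψ x)⟩

section Representation

variable {X : Type*} [TopologicalSpace X] [MeasurableSpace X] [BorelSpace X] {ν : Measure X}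
  [IsFiniteMeasure ν]

lemma integral_abs_le_mul_norm_toLp (f : X →ᵇ ℝ) :
    ∫ x, |f x| ∂ν ≤ ‖toLp (E := ℝ) 2 ν ℝ 1‖ * ‖toLp (E := ℝ) 2 ν ℝ f‖ := by
  have hnorm : ‖toLp (E := ℝ) 2 ν ℝ |f|‖ = ‖toLp (E := ℝ) 2 ν ℝ f‖ := by
    simp only [Lp.norm_def]
    congr 1
    refine eLpNorm_congr_norm_ae ?_
    filter_upwards [coeFn_toLp (E := ℝ) 2 ν ℝ f, coeFn_toLp (E := ℝ) 2 ν ℝ |f|] with x hf hf'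
    simp [hf, hf']
  calc ∫ x, |f x| ∂ν = inner ℝ (toLp (E := ℝ) 2 ν ℝ 1) (toLp (E := ℝ) 2 ν ℝ |f|) := by
        rw [L2.inner_def]
        refine integral_congr_ae ?_
        filter_upwards [coeFn_toLp (E := ℝ) 2 ν ℝ 1, coeFn_toLp (E := ℝ) 2 ν ℝ |f|] with x h1 hf
        simp [h1, hf]
    _ ≤ _ := hnorm ▸ real_inner_le_norm _ _

lemma exists_Lp_integral_mul_eq (Λ : (X →ᵇ ℝ) →ₗ[ℝ] ℝ) (hΛ : ∀ f, |Λ f| ≤ ∫ x, |f x| ∂ν) :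
    ∃ g : Lp ℝ 2 ν, ∀ f : X →ᵇ ℝ, ∫ x, f x * g x ∂ν = Λ f := by
  obtain ⟨T, hT⟩ := (toLp (E := ℝ) 2 ν ℝ).toLinearMap.exists_strongDual_comp_eq Λ
    fun f ↦ (hΛ f).trans (integral_abs_le_mul_norm_toLp f)
  refine ⟨(InnerProductSpace.toDual ℝ _).symm T, fun f ↦ ?_⟩
  rw [← hT, ContinuousLinearMap.coe_coe, ← InnerProductSpace.toDual_symm_apply, L2.inner_def]
  refine integral_congr_ae ?_
  filter_upwards [coeFn_toLp (E := ℝ) 2 ν ℝ f] with x hf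
  simp [hf]

variable [PseudoMetrizableSpace X]

lemma ae_nonneg_of_forall_integral_mul_nonneg {h : X → ℝ} (hh : Integrable h ν)
    (H : ∀ f : X →ᵇ ℝ, (∀ x, 0 ≤ f x) → 0 ≤ ∫ x, f x * h x ∂ν) : 0 ≤ᵐ[ν] h := by
  have hclosed (F : Set X) (hF : IsClosed F) : 0 ≤ ∫ x in F, h x ∂ν :=
    ge_of_tendsto' (hF.tendsto_integral_realApprSeq_mul hh) fun k ↦
      H _ (hF.realApprSeq_nonneg k)
  rw [EventuallyLE, ae_iff]
  -- otherwise inner regularity gives a closed `F ⊆ {h < 0}` with `ν F > 0`, so `∫_F h < 0`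
  by_contra hpos
  obtain ⟨t, hts, ht, htae⟩ := (nullMeasurableSet_lt hh.1.aemeasurable aemeasurable_const
    (μ := ν) (f := h) (g := fun _ ↦ 0)).exists_measurable_subset_ae_eq
  obtain ⟨F, hFt, hF, hνF⟩ := ht.exists_lt_isClosed_of_ne_top (measure_ne_top ν t)
    (r := 0) (by rw [measure_congr htae]; simpa [not_le, pos_iff_ne_zero] using hpos)
  have hneg : ∀ x ∈ F, h x < 0 := fun x hx ↦ hts (hFt hx)
  have : 0 < ∫ x in F, -h x ∂ν := by
    rw [setIntegral_pos_iff_support_of_nonneg_ae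
      ((ae_restrict_mem hF.measurableSet).mono fun x hx ↦ (neg_pos.mpr (hneg x hx)).le)
      hh.neg.integrableOn]
    rwa [inter_eq_right.mpr fun x hx ↦ Function.mem_support.mpr (neg_pos.mpr (hneg x hx)).ne']
  linarith [integral_neg (μ := ν.restrict F) h, hclosed F hF]

lemma exists_measure_le_integral_eq (Λ : (X →ᵇ ℝ) →ₗ[ℝ] ℝ)
    (hpos : ∀ f : X →ᵇ ℝ, (∀ x, 0 ≤ f x) → 0 ≤ Λ f)
    (hle : ∀ f : X →ᵇ ℝ, (∀ x, 0 ≤ f x) → Λ f ≤ ∫ x, f x ∂ν) :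
    ∃ m ≤ ν, ∀ f : X →ᵇ ℝ, ∫ x, f x ∂m = Λ f := by
  have habs (f : X →ᵇ ℝ) : |Λ f| ≤ ∫ x, |f x| ∂ν := by
    have h₁ := hpos (|f| - f) fun x ↦ by simp [le_abs_self]
    have h₂ := hpos (|f| + f) fun x ↦ by simp; linarith [neg_abs_le (f x)]
    have h₃ := hle |f| fun x ↦ abs_nonneg _
    simp only [map_sub, map_add, BoundedContinuousFunction.coe_abs, Pi.abs_apply] at h₁ h₂ h₃
    exact abs_le.mpr ⟨by linarith, by linarith⟩
  obtain ⟨g, hg⟩ := exists_Lp_integral_mul_eq Λ habs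
  have hgint : Integrable g ν := (Lp.memLp g).integrable one_le_two
  have hg₀ : 0 ≤ᵐ[ν] g :=
    ae_nonneg_of_forall_integral_mul_nonneg hgint fun f hf ↦ (hg f).symm ▸ hpos f hf
  have hg₁ : 0 ≤ᵐ[ν] fun x ↦ 1 - g x := by
    refine ae_nonneg_of_forall_integral_mul_nonneg ((integrable_const 1).sub hgint) fun f hf ↦ ?_
    have hfg : Integrable (fun x ↦ f x * g x) ν :=
      hgint.bdd_mul f.continuous.aestronglyMeasurable (ae_of_all _ f.norm_coe_le_norm)
    simp only [mul_sub, mul_one, integral_sub (f.integrable ν) hfg, hg f]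
    linarith [hle f hf]
  refine ⟨ν.withDensity fun x ↦ ENNReal.ofReal (g x), ?_, fun f ↦ ?_⟩
  · calc ν.withDensity (fun x ↦ ENNReal.ofReal (g x)) ≤ ν.withDensity 1 :=
          withDensity_mono <| hg₁.mono fun x hx ↦ by simpa using hx
      _ = ν := withDensity_one
  · rw [integral_withDensity_eq_integral_toReal_smul
      (Lp.stronglyMeasurable g).measurable.ennreal_ofReal (ae_of_all _ fun _ ↦ ofReal_lt_top),
      ← hg f]
    refine integral_congr_ae (hg₀.mono fun x hx ↦ ?_)
    simp [ENNReal.toReal_ofReal hx, mul_comm]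

end Representation

noncomputable def BoundedContinuousFunction.integralLinearMap {X : Type*} [TopologicalSpace X]
    [MeasurableSpace X] [OpensMeasurableSpace X] (μ : Measure X) [IsFiniteMeasure μ] :
    (X →ᵇ ℝ) →ₗ[ℝ] ℝ where
  toFun f := ∫ x, f x ∂μ
  map_add' f g := integral_add (f.integrable μ) (g.integrable μ)
  map_smul' c f := integral_smul c f

section WeakLimit

variable {X : Type*} [TopologicalSpace X] [MeasurableSpace X]

lemma tendsto_measure_univ_of_tendsto_integral_one {ι : Type*} {l : Filter ι}
    {μ : ι → Measure X} [∀ i, IsFiniteMeasure (μ i)] {ν : Measure X} [IsFiniteMeasure ν]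
    (h : Tendsto (fun i ↦ ∫ x, (1 : X →ᵇ ℝ) x ∂μ i) l (𝓝 (∫ x, (1 : X →ᵇ ℝ) x ∂ν))) :
    Tendsto (fun i ↦ μ i univ) l (𝓝 (ν univ)) := by
  simp only [BoundedContinuousFunction.coe_one, Pi.one_apply, integral_const, smul_eq_mul,
    mul_one] at h
  exact (ENNReal.tendsto_toReal_iff (fun i ↦ measure_ne_top _ _) (measure_ne_top _ _)).mp h

variable [OpensMeasurableSpace X] [HasOuterApproxClosed X] [SecondCountableTopology X]

lemma measure_prod_compl_eq_zero_of_tendsto {ι : Type*} {l : Filter ι} [l.NeBot]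
    {μ : ι → Measure X} [∀ i, IsFiniteMeasure (μ i)] {m : Measure X} [IsFiniteMeasure m]
    (hlim : ∀ f : X →ᵇ ℝ, Tendsto (fun i ↦ ∫ x, f x ∂μ i) l (𝓝 (∫ x, f x ∂m)))
    {A : Set (X × X)} (hA : IsClosed A) (hsupp : ∀ i, (μ i).prod (μ i) Aᶜ = 0) :
    m.prod m Aᶜ = 0 := by
  refine measure_prod_eq_zero_of_isOpen m m hA.isOpen_compl fun V W hV hW hVW ↦ ?_
  let f (k : ℕ) := 1 - hV.isClosed_compl.realApprSeq k
  let g (k : ℕ) := 1 - hW.isClosed_compl.realApprSeq k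
  have hfg (k : ℕ) (p : X × X) (hp : p ∈ A) : f k p.1 * g k p.2 = 0 := by
    by_cases hpV : p.1 ∈ V
    · have hpW : p.2 ∉ W := fun hpW ↦ hVW (mem_prod.mpr ⟨hpV, hpW⟩) hp
      simp [g, hW.isClosed_compl.realApprSeq_eq_one k hpW]
    · simp [f, hV.isClosed_compl.realApprSeq_eq_one k hpV]
  have hk (k : ℕ) : (∫ x, f k x ∂m) * ∫ x, g k x ∂m = 0 :=
    tendsto_nhds_unique ((hlim (f k)).mul (hlim (g k))) <| tendsto_const_nhds.congr fun i ↦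
      (integral_mul_integral_eq_zero (hsupp i) (hfg k)).symm
  have hreal : m.real V * m.real W = 0 := tendsto_nhds_unique
    ((hV.tendsto_integral_one_sub_realApprSeq m).mul (hW.tendsto_integral_one_sub_realApprSeq m))
    (tendsto_const_nhds.congr fun k ↦ (hk k).symm)
  rw [measureReal_def, measureReal_def, ← ENNReal.toReal_mul, ENNReal.toReal_eq_zero_iff] at hreal
  exact hreal.resolve_right (mul_ne_top (measure_ne_top m V) (measure_ne_top m W))

end WeakLimit

theorem WeakConv.exists_limit_submeasure {X : Type*} [TopologicalSpace X]
    [PseudoMetrizableSpace X] [SecondCountableTopology X]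
    [MeasurableSpace X] [BorelSpace X] {μ μ' : ℕ → Measure X} [∀ n, IsFiniteMeasure (μ n)]
    {ν : Measure X} [IsFiniteMeasure ν] (hconv : WeakConv μ ν) (hle : ∀ n, μ' n ≤ μ n)
    {ε : ℝ≥0∞} (hmass : ∀ n, μ n univ ≤ μ' n univ + ε) {A : Set (X × X)} (hA : IsClosed A)
    (hsupp : ∀ n, (μ' n).prod (μ' n) Aᶜ = 0) :
    ∃ m ≤ ν, ν univ ≤ m univ + ε ∧ m.prod m Aᶜ = 0 := by
  have (n : ℕ) : IsFiniteMeasure (μ' n) := isFiniteMeasure_of_le _ (hle n)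
  have hbdd (f : X →ᵇ ℝ) : ∃ C, ∀ n, |integralLinearMap (μ' n) f| ≤ C := by
    obtain ⟨C, hC⟩ := (hconv |f|).bddAbove_range
    refine ⟨C, fun n ↦ ?_⟩
    calc |∫ x, f x ∂μ' n| ≤ ∫ x, |f x| ∂μ' n := abs_integral_le_integral_abs
      _ ≤ ∫ x, |f x| ∂μ n :=
        integral_mono_measure (hle n) (ae_of_all _ fun _ ↦ abs_nonneg _) (f.integrable _).abs
      _ ≤ C := hC ⟨n, rfl⟩
  obtain ⟨U, Λ, hU, hΛ⟩ := exists_ultrafilter_tendsto_linearMap (atTop : Filter ℕ)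
    (fun n ↦ integralLinearMap (μ' n)) hbdd
  obtain ⟨m, hmν, hm⟩ := exists_measure_le_integral_eq Λ
    (fun f hf ↦ ge_of_tendsto' (hΛ f) fun n ↦ integral_nonneg hf)
    (fun f hf ↦ le_of_tendsto_of_tendsto' (hΛ f) ((hconv f).mono_left hU) fun n ↦
      integral_mono_measure (hle n) (ae_of_all _ hf) (f.integrable _))
  have : IsFiniteMeasure m := isFiniteMeasure_of_le ν hmν
  have hlim (f : X →ᵇ ℝ) : Tendsto (fun n ↦ ∫ x, f x ∂μ' n) U (𝓝 (∫ x, f x ∂m)) :=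
    hm f ▸ hΛ f
  have hν := (tendsto_measure_univ_of_tendsto_integral_one (hconv 1)).mono_left hU
  have hm' := tendsto_measure_univ_of_tendsto_integral_one (hlim 1)
  exact ⟨m, hmν, le_of_tendsto_of_tendsto' hν (hm'.add_const ε) hmass,
    measure_prod_compl_eq_zero_of_tendsto hlim hA hsupp⟩

theorem memM_of_weak_limit_general {E I : Type*}
    [MetricSpace E] [SecondCountableTopology E]
    [MeasurableSpace E] [BorelSpace E]
    [MetricSpace I] [SecondCountableTopology I]
    [MeasurableSpace I] [BorelSpace I]
    (δ ε : ℝ)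
    (μ : ℕ → Measure (E × I)) [∀ n, IsFiniteMeasure (μ n)]
    (ν : Measure (E × I)) [IsFiniteMeasure ν]
    (hconv : WeakConv μ ν)
    (hn : ∀ n, memM (μ n) δ (ENNReal.ofReal ε)) :
    memM ν δ (ENNReal.ofReal ε) := by
  choose μ' _ hle hvar hsupp using hn
  obtain ⟨m, hmν, hmass, hnull⟩ := hconv.exists_limit_submeasure hle
    (fun n ↦ (measure_univ_le_add_varDist _ _).trans (by gcongr; exact hvar n))
    (isClosed_Aset δ _) hsupp
  exact ⟨m, isFiniteMeasure_of_le ν hmν, hmν, varDist_le_of_le hmν hmass, hnull⟩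

/-- Closedness of `M^E_{δ,ε}` under weak limits. -/
theorem memM_of_weak_limit {E I : Type*}
    [MetricSpace E] [CompleteSpace E] [SecondCountableTopology E]
    [MeasurableSpace E] [BorelSpace E]
    [MetricSpace I] [CompleteSpace I] [SecondCountableTopology I]
    [MeasurableSpace I] [BorelSpace I]
    (δ ε : ℝ) (hδ : 0 < δ) (hε : 0 < ε)
    (μ : ℕ → Measure (E × I)) [∀ n, IsFiniteMeasure (μ n)]
    (ν : Measure (E × I)) [IsFiniteMeasure ν]
    (hconv : WeakConv μ ν)
    (hn : ∀ n, memM (μ n) δ (ENNReal.ofReal ε)) :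
    memM ν δ (ENNReal.ofReal ε) :=
  memM_of_weak_limit_general δ ε μ ν hconv hn
end
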